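/- Fix s ∈ [d], vectors w⁽¹⁾*,…,w⁽ⁿ⁾* ∈ [-1/√s, 1/√s]ᵈ each with ‖w⁽ⁱ⁾*‖₀ ≤ s, and let F : ℝᵈ → ℝⁿ be defined by F(x)ᵢ = σ(⟨w⁽ⁱ⁾*, x⟩). Sample w⁽¹⁾,…,w⁽ᵏ⁾ i.i.d. uniform on [-1,1]ᵈ and u⁽¹⁾,…,u⁽ⁿ⁾ i.i.d. uniform on [-1,1]ᵏ. If k ≥ n·s·⌈(16s²n/ε²)·log(2ns/δ)⌉, then with probability at least 1-δ there exist binary masks b⁽¹⁾,…,b⁽ᵏ⁾ ∈ {0,1}ᵈ and b̃⁽¹⁾,…,b̃⁽ⁿ⁾ ∈ {0,1}ᵏ such that G(x)ᵢ = σ(Σⱼ b̃⁽ⁱ⁾ⱼ u⁽ⁱ⁾ⱼ σ(⟨w⁽ʲ⁾ ⊙ b⁽ʲ⁾, x⟩)) satisfies ‖G(x) - F(x)‖₂ ≤ ε for all ‖x‖_∞ ≤ 1, with Σⱼ ‖b⁽ʲ⁾‖₀ ≤ 2sn and Σᵢ ‖b̃⁽ⁱ⁾‖₀ ≤ 2sn.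 -/

import Mathlib

open MeasureTheory ProbabilityTheory Real
open scoped Classical

noncomputable def relu (t : ℝ) : ℝ := max t 0

noncomputable def unif {α : Type*} [MeasureSpace α] (s : Set α) : Measure α :=
  (volume s)⁻¹ • volume.restrict s

noncomputable def l0 {d : ℕ} (b : Fin d → ℝ) : ℕ :=
  (Finset.univ.filter (fun t => b t ≠ 0)).card

noncomputable def l2norm {d : ℕ} (x : Fin d → ℝ) : ℝ := Real.sqrt (∑ t, (x t) ^ 2)

/-!
Put `g = ε / (s √n)`. Since `σ (w x) = w σ x` for `w ≥ 0`, two hidden neurons `j⁺, j⁻` with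
`W j⁺ t > 0 > W j⁻ t` and both path weights `U i j± * W j± t` within `g` of `w*ᵢₜ` reproduce
`x ↦ w*ᵢₜ xₜ` up to `g` on `[-1, 1]`: for `xₜ ≥ 0` only `j⁺` fires, for `xₜ ≤ 0` only `j⁻`.
Each of the at most `n s` nonzero weights `w*ᵢₜ` gets its own block of `m` hidden neurons; `W j t`
and `U i j` fall into suitable intervals of length `g / 2` with probability `g / 4` each,
independently over the block, so a block lacks `j⁺` (or `j⁻`) with probability at most
`(1 - g² / 16) ^ m ≤ δ / (2 n s)`. Keeping only these pairs, every output neuron is within `s g`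
of its target before the final ReLU, so the Euclidean error is at most `√n s g = ε`.
-/

open Set Finset Function

lemma relu_of_nonneg {x : ℝ} (hx : 0 ≤ x) : relu x = x := max_eq_left hx

lemma relu_of_nonpos {x : ℝ} (hx : x ≤ 0) : relu x = 0 := max_eq_right hx

lemma abs_relu_sub_relu_le (a b : ℝ) : |relu a - relu b| ≤ |a - b| :=
  abs_max_sub_max_le_abs a b 0

lemma abs_mul_add_mul_relu_sub_le {wp wn up un c g x : ℝ} (hwp : 0 < wp) (hwn : wn < 0)
    (hp : |up * wp - c| ≤ g) (hn : |un * wn - c| ≤ g) (hx : |x| ≤ 1) :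
    |up * relu (wp * x) + un * relu (wn * x) - c * x| ≤ g := by
  rcases le_total 0 x with hx0 | hx0
  · rw [relu_of_nonneg (mul_nonneg hwp.le hx0),
      relu_of_nonpos (mul_nonpos_of_nonpos_of_nonneg hwn.le hx0),
      show up * (wp * x) + un * 0 - c * x = (up * wp - c) * x by ring, abs_mul]
    exact (mul_le_of_le_one_right (abs_nonneg _) hx).trans hp
  · rw [relu_of_nonpos (mul_nonpos_of_nonneg_of_nonpos hwp.le hx0),
      relu_of_nonneg (mul_nonneg_of_nonpos_of_nonpos hwn.le hx0),
      show up * 0 + un * (wn * x) - c * x = (un * wn - c) * x by ring, abs_mul]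
    exact (mul_le_of_le_one_right (abs_nonneg _) hx).trans hn

/-- The interval for `v` is `[c - g/4, c + g/4]`, pushed back into `[-1, 1]`. -/
lemma exists_Icc_abs_mul_sub_le {c g : ℝ} (hc : |c| ≤ 1) (hg0 : 0 ≤ g) (hg4 : g ≤ 4) :
    ∃ u, -1 ≤ u ∧ u + g / 2 ≤ 1 ∧
      ∀ w ∈ Icc (1 - g / 2) 1, ∀ v ∈ Icc u (u + g / 2), |v * w - c| ≤ g := by
  rw [abs_le] at hc
  set u := max (-1) (min (c - g / 4) (1 - g / 2))
  have hu1 : -1 ≤ u := le_max_left _ _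
  have hu2 : u + g / 2 ≤ 1 := by
    have := min_le_right (c - g / 4) (1 - g / 2)
    rcases max_cases (-1 : ℝ) (min (c - g / 4) (1 - g / 2)) with ⟨h, -⟩ | ⟨h, -⟩ <;> linarith
  have hu3 : c - g / 2 ≤ u := le_max_of_le_right (le_min (by linarith) (by linarith))
  have hu4 : u ≤ c := max_le (by linarith) ((min_le_left _ _).trans (by linarith))
  refine ⟨u, hu1, hu2, fun w ⟨hw1, hw2⟩ v ⟨hv1, hv2⟩ => ?_⟩
  calc |v * w - c| = |v * (w - 1) + (v - c)| := by ring_nf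
    _ ≤ |v| * |w - 1| + |v - c| := by rw [← abs_mul]; exact abs_add_le _ _
    _ ≤ 1 * (g / 2) + g / 2 := by
        gcongr
        · exact abs_le.2 ⟨by linarith, by linarith⟩
        · exact abs_le.2 ⟨by linarith, by linarith⟩
        · exact abs_le.2 ⟨by linarith, by linarith⟩
    _ = g := by ring

lemma one_sub_pow_le_exp_neg_mul {q : ℝ} (hq : q ≤ 1) (m : ℕ) :
    (1 - q) ^ m ≤ exp (-(q * m)) := by
  calc (1 - q) ^ m ≤ exp (-q) ^ m := pow_le_pow_left₀ (by linarith) (one_sub_le_exp_neg q) m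
    _ = exp (-(q * m)) := by rw [← exp_nat_mul]; ring_nf

lemma l2norm_le_sqrt_mul {n : ℕ} {v : Fin n → ℝ} {c : ℝ} (hc : 0 ≤ c) (hv : ∀ i, |v i| ≤ c) :
    l2norm v ≤ √n * c := by
  have hsum : ∑ i, v i ^ 2 ≤ n * c ^ 2 := by
    calc ∑ i, v i ^ 2 ≤ ∑ _i : Fin n, c ^ 2 :=
          sum_le_sum fun i _ => sq_le_sq' (abs_le.1 (hv i)).1 (abs_le.1 (hv i)).2
      _ = n * c ^ 2 := by simp
  calc l2norm v ≤ √(n * c ^ 2) := Real.sqrt_le_sqrt hsum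
    _ = √n * c := by rw [Real.sqrt_mul n.cast_nonneg, Real.sqrt_sq hc]

lemma sum_ite_ne_zero_eq_l0_smul {d : ℕ} {M : Type*} [AddCommMonoid M] (b : Fin d → ℝ) (a : M) :
    ∑ t, (if b t ≠ 0 then a else 0) = l0 b • a := by
  rw [← sum_filter, sum_const]
  rfl

lemma card_filter_exists_mem_le {α ι : Type*} [Fintype α] [Fintype ι] (G : α → Finset ι)
    [DecidablePred fun j => ∃ a, j ∈ G a] : #{j | ∃ a, j ∈ G a} ≤ ∑ a, #(G a) := by
  classical
  have : ({j | ∃ a, j ∈ G a} : Finset ι) = univ.biUnion G := by ext; simp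
  rw [this]
  exact card_biUnion_le

lemma card_filter_ne_zero_le {d n s : ℕ} {w : Fin n → Fin d → ℝ} (hw : ∀ i, l0 (w i) ≤ s) :
    #{p : Fin n × Fin d | w p.1 p.2 ≠ 0} ≤ n * s := by
  calc #{p : Fin n × Fin d | w p.1 p.2 ≠ 0} = ∑ i, l0 (w i) := by
        simp only [card_filter, Fintype.sum_prod_type, sum_ite_ne_zero_eq_l0_smul, smul_eq_mul,
          mul_one]
    _ ≤ ∑ _i : Fin n, s := sum_le_sum fun i _ => hw i
    _ = n * s := by simp

lemma exists_pairwise_disjoint_card_eq {α : Type*} (P : Finset α) {m k : ℕ} (h : #P * m ≤ k) :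
    ∃ J : α → Finset (Fin k), Pairwise (Disjoint on J) ∧ ∀ p ∈ P, #(J p) = m := by
  let slot : Fin #P × Fin m ↪ Fin k :=
    ⟨fun qr => Fin.castLE h (finProdFinEquiv qr),
      (Fin.castLE_injective h).comp finProdFinEquiv.injective⟩
  refine ⟨fun p => if hp : p ∈ P then univ.map ((Embedding.sectR (P.equivFin ⟨p, hp⟩) _).trans slot)
    else ∅, fun p q hpq => ?_, fun p hp => by simp [hp]⟩
  simp only [onFun]
  split_ifs with hp hq
  · refine disjoint_left.2 fun j hjp hjq => hpq ?_
    obtain ⟨r, -, rfl⟩ := mem_map.1 hjp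
    obtain ⟨r', -, hr'⟩ := mem_map.1 hjq
    simpa using congrArg Prod.fst (slot.injective hr'.symm)
  all_goals simp

def HasApproxPair {ι : Type*} (W U : ι → ℝ) (c g : ℝ) (J : Finset ι) : Prop :=
  (∃ j ∈ J, 0 < W j ∧ |U j * W j - c| ≤ g) ∧ ∃ j ∈ J, W j < 0 ∧ |U j * W j - c| ≤ g

lemma HasApproxPair.exists_subset_card_le_two {ι : Type*} {W U : ι → ℝ} {c g : ℝ}
    {J : Finset ι} (h : HasApproxPair W U c g J) :
    ∃ F ⊆ J, #F ≤ 2 ∧ ∀ x, |x| ≤ 1 → |∑ j ∈ F, U j * relu (W j * x) - c * x| ≤ g := by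
  obtain ⟨⟨jp, hjp, hWp, hp⟩, jn, hjn, hWn, hn⟩ := h
  have hne : jp ≠ jn := fun h => by rw [h] at hWp; linarith
  refine ⟨{jp, jn}, insert_subset hjp (singleton_subset_iff.2 hjn), card_le_two,
    fun x hx => ?_⟩
  rw [sum_pair hne]
  exact abs_mul_add_mul_relu_sub_le hWp hWn hp hn hx

section Probability

variable {Ω : Type*} [MeasurableSpace Ω] {μ : Measure Ω}

lemma ProbabilityTheory.iIndepFun.measure_biInter_preimage_inter_preimage {κ β : Type*}
    [MeasurableSpace β] {X Y : κ → Ω → β} (h : iIndepFun (Sum.elim X Y) μ) {S S' : Set β}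
    (hS : MeasurableSet S) (hS' : MeasurableSet S') (T : Finset κ) :
    μ (⋂ j ∈ T, (X j ⁻¹' S ∩ Y j ⁻¹' S')) = ∏ j ∈ T, μ (X j ⁻¹' S) * μ (Y j ⁻¹' S') := by
  have := h.meas_biInter (S := T.disjSum T)
    (s := Sum.elim (fun j => X j ⁻¹' S) (fun j => Y j ⁻¹' S'))
    (by rintro (j | j) -; exacts [⟨S, hS, rfl⟩, ⟨S', hS', rfl⟩])
  rw [prod_disjSum, ← prod_mul_distrib] at this
  simp only [Sum.elim_inl, Sum.elim_inr] at this
  rw [← this]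
  congr 1
  ext ω
  simp [forall_and]

lemma measure_biInter_compl_eq_prod [IsProbabilityMeasure μ] {ι : Type*} {C : ι → Set Ω}
    (hC : ∀ j, NullMeasurableSet (C j) μ)
    (hprod : ∀ T : Finset ι, μ (⋂ j ∈ T, C j) = ∏ j ∈ T, μ (C j)) (T : Finset ι) :
    μ (⋂ j ∈ T, (C j)ᶜ) = ∏ j ∈ T, (1 - μ (C j)) := by
  -- `iIndepSet` needs measurable sets, so pass to measurable versions a.e. equal to the `C j`
  set C' := fun j => toMeasurable μ (C j)
  have hae : ∀ j, C' j =ᵐ[μ] C j := fun j => (hC j).toMeasurable_ae_eq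
  have hbiInter : ∀ (T : Finset ι) (D D' : ι → Set Ω), (∀ j, D j =ᵐ[μ] D' j) →
      (⋂ j ∈ T, D j) =ᵐ[μ] ⋂ j ∈ T, D' j := fun T D D' h =>
    Filter.EventuallyEq.countable_bInter T.countable_toSet fun j _ => h j
  have hindep : iIndepSet C' μ := by
    refine (iIndepSet_iff_meas_biInter fun j => measurableSet_toMeasurable μ _).2 fun T => ?_
    rw [measure_congr (hbiInter T _ _ hae), hprod]
    exact prod_congr rfl fun j _ => (measure_toMeasurable _).symm
  rw [measure_congr (hbiInter T _ _ fun j => (hae j).compl).symm,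
    ((iIndepSet_iff_iIndep _ _).1 hindep).meas_biInter fun j _ =>
      (MeasurableSpace.measurableSet_generateFrom (mem_singleton _)).compl]
  exact prod_congr rfl fun j _ => by
    rw [prob_compl_eq_one_sub (measurableSet_toMeasurable μ _), measure_toMeasurable]

lemma ProbabilityTheory.iIndepFun.measure_biInter_compl_preimage_inter_preimage
    [IsProbabilityMeasure μ] {κ β : Type*} [MeasurableSpace β] {X Y : κ → Ω → β}
    (h : iIndepFun (Sum.elim X Y) μ) (hX : ∀ j, AEMeasurable (X j) μ)
    (hY : ∀ j, AEMeasurable (Y j) μ) {S S' : Set β}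
    (hS : MeasurableSet S) (hS' : MeasurableSet S') (T : Finset κ) :
    μ (⋂ j ∈ T, (X j ⁻¹' S ∩ Y j ⁻¹' S')ᶜ) = ∏ j ∈ T, (1 - μ (X j ⁻¹' S) * μ (Y j ⁻¹' S')) := by
  have hprod := h.measure_biInter_preimage_inter_preimage hS hS'
  have hsingle : ∀ j, μ (X j ⁻¹' S ∩ Y j ⁻¹' S') = μ (X j ⁻¹' S) * μ (Y j ⁻¹' S') := fun j => by
    simpa using hprod {j}
  rw [measure_biInter_compl_eq_prod
    (fun j => ((hX j).nullMeasurable hS).inter ((hY j).nullMeasurable hS'))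
    (fun T => (hprod T).trans (prod_congr rfl fun j _ => (hsingle j).symm))]
  simp_rw [hsingle]

lemma unif_Icc_apply {l r a b : ℝ} (hlr : l < r) (hla : l ≤ a) (hbr : b ≤ r) :
    unif (Icc l r) (Icc a b) = ENNReal.ofReal ((b - a) / (r - l)) := by
  rw [unif, Measure.smul_apply, Measure.restrict_apply measurableSet_Icc,
    inter_eq_left.2 (Icc_subset_Icc hla hbr), Real.volume_Icc, Real.volume_Icc, smul_eq_mul,
    mul_comm, ← div_eq_mul_inv, ← ENNReal.ofReal_div_of_pos (by linarith)]

lemma aemeasurable_of_map_eq_unif {X : Ω → ℝ} {l r : ℝ} (hlr : l < r)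
    (hX : μ.map X = unif (Icc l r)) : AEMeasurable X μ := by
  refine AEMeasurable.of_map_ne_zero fun h => ?_
  have := unif_Icc_apply hlr le_rfl le_rfl
  rw [← hX, h, div_self (by linarith)] at this
  simp at this

lemma measure_preimage_Icc_of_map_eq_unif {X : Ω → ℝ} {l r a b : ℝ} (hlr : l < r)
    (hX : μ.map X = unif (Icc l r)) (hla : l ≤ a) (hbr : b ≤ r) :
    μ (X ⁻¹' Icc a b) = ENNReal.ofReal ((b - a) / (r - l)) := by
  rw [← Measure.map_apply_of_aemeasurable (aemeasurable_of_map_eq_unif hlr hX) measurableSet_Icc,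
    hX, unif_Icc_apply hlr hla hbr]

lemma measure_biInter_compl_preimage_Icc_inter_le [IsProbabilityMeasure μ] {κ : Type*}
    {X Y : κ → Ω → ℝ} (hXY : iIndepFun (Sum.elim X Y) μ)
    (hX : ∀ j, μ.map (X j) = unif (Icc (-1) 1)) (hY : ∀ j, μ.map (Y j) = unif (Icc (-1) 1))
    {g a b u v : ℝ} (hg : 0 ≤ g) (ha : -1 ≤ a) (hb : b ≤ 1) (hu : -1 ≤ u) (hv : v ≤ 1)
    (hab : b - a = g / 2) (huv : v - u = g / 2) (J : Finset κ) :
    μ (⋂ j ∈ J, (X j ⁻¹' Icc a b ∩ Y j ⁻¹' Icc u v)ᶜ) ≤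
      ENNReal.ofReal (exp (-(g ^ 2 / 16 * #J))) := by
  have hhit : ∀ j, 1 - μ (X j ⁻¹' Icc a b) * μ (Y j ⁻¹' Icc u v) =
      ENNReal.ofReal (1 - g ^ 2 / 16) := fun j => by
    rw [measure_preimage_Icc_of_map_eq_unif (by norm_num) (hX j) ha hb,
      measure_preimage_Icc_of_map_eq_unif (by norm_num) (hY j) hu hv, hab, huv,
      ← ENNReal.ofReal_mul (by positivity), ← ENNReal.ofReal_one,
      ← ENNReal.ofReal_sub _ (by positivity)]
    ring_nf
  rw [hXY.measure_biInter_compl_preimage_inter_preimage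
      (fun j => aemeasurable_of_map_eq_unif (by norm_num) (hX j))
      (fun j => aemeasurable_of_map_eq_unif (by norm_num) (hY j))
      measurableSet_Icc measurableSet_Icc,
    prod_congr rfl fun j _ => hhit j, prod_const, ← ENNReal.ofReal_pow (by nlinarith)]
  exact ENNReal.ofReal_le_ofReal (one_sub_pow_le_exp_neg_mul (by nlinarith) _)

lemma measure_not_hasApproxPair_le [IsProbabilityMeasure μ] {κ : Type*} {X Y : κ → Ω → ℝ}
    (hXY : iIndepFun (Sum.elim X Y) μ) (hX : ∀ j, μ.map (X j) = unif (Icc (-1) 1))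
    (hY : ∀ j, μ.map (Y j) = unif (Icc (-1) 1)) {c g : ℝ} (hc : |c| ≤ 1) (hg0 : 0 < g)
    (hg2 : g < 2) (J : Finset κ) :
    μ {ω | ¬ HasApproxPair (X · ω) (Y · ω) c g J} ≤
      2 * ENNReal.ofReal (exp (-(g ^ 2 / 16 * #J))) := by
  obtain ⟨u, hu1, hu2, hpos⟩ := exists_Icc_abs_mul_sub_le hc hg0.le (by linarith)
  -- the rectangle for negative `W` is the mirror image of the positive one for `-c`
  obtain ⟨u', hu1', hu2', hneg⟩ :=
    exists_Icc_abs_mul_sub_le (c := -c) (by rwa [abs_neg]) hg0.le (by linarith)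
  have hsub : {ω | ¬ HasApproxPair (X · ω) (Y · ω) c g J} ⊆
      (⋂ j ∈ J, (X j ⁻¹' Icc (1 - g / 2) 1 ∩ Y j ⁻¹' Icc u (u + g / 2))ᶜ) ∪
        ⋂ j ∈ J, (X j ⁻¹' Icc (-1) (-1 + g / 2) ∩ Y j ⁻¹' Icc u' (u' + g / 2))ᶜ := by
    intro ω hω
    rcases not_and_or.1 hω with h | h
    · refine Or.inl (mem_iInter₂.2 fun j hj ⟨hw, hv⟩ => h ⟨j, hj, ?_, hpos _ hw _ hv⟩)
      linarith [hw.1]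
    · refine Or.inr (mem_iInter₂.2 fun j hj ⟨hw, hv⟩ => h ⟨j, hj, by linarith [hw.2], ?_⟩)
      have := hneg (-X j ω) ⟨by linarith [hw.2], by linarith [hw.1]⟩ _ hv
      rwa [mul_neg, ← neg_add', abs_neg, ← sub_eq_add_neg] at this
  calc _ ≤ _ := measure_mono hsub
    _ ≤ _ := measure_union_le _ _
    _ ≤ _ := add_le_add
        (measure_biInter_compl_preimage_Icc_inter_le hXY hX hY hg0.le (by linarith) le_rfl
          hu1 hu2 (by ring) (by ring) J)
        (measure_biInter_compl_preimage_Icc_inter_le hXY hX hY hg0.le le_rfl (by linarith)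
          hu1' hu2' (by ring) (by ring) J)
    _ = _ := (two_mul _).symm

lemma ofReal_one_sub_le_of_measure_compl_le [IsProbabilityMeasure μ] {G : Set Ω} {δ : ℝ}
    (hδ : 0 ≤ δ) (hG : μ Gᶜ ≤ ENNReal.ofReal δ) : ENNReal.ofReal (1 - δ) ≤ μ G := by
  have hcover : 1 ≤ μ G + μ Gᶜ := by
    rw [← measure_univ (μ := μ), ← union_compl_self G]
    exact measure_union_le _ _
  rw [ENNReal.ofReal_sub _ hδ, ENNReal.ofReal_one]
  exact tsub_le_iff_right.2 (hcover.trans (add_le_add le_rfl hG))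

lemma ofReal_one_sub_le_measure_forall_hasApproxPair [IsProbabilityMeasure μ] {k d n : ℕ}
    (W : Fin k → Ω → Fin d → ℝ) (U : Fin n → Ω → Fin k → ℝ)
    (hindep : iIndepFun (Sum.elim (fun p : Fin k × Fin d => fun ω => W p.1 ω p.2)
      (fun p : Fin n × Fin k => fun ω => U p.1 ω p.2)) μ)
    (hW : ∀ j t, μ.map (fun ω => W j ω t) = unif (Icc (-1 : ℝ) 1))
    (hU : ∀ i j, μ.map (fun ω => U i ω j) = unif (Icc (-1 : ℝ) 1))
    {c : Fin n × Fin d → ℝ} (hc : ∀ p, |c p| ≤ 1) {g : ℝ} (hg0 : 0 < g) (hg2 : g < 2)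
    (P : Finset (Fin n × Fin d)) (J : Fin n × Fin d → Finset (Fin k)) {m : ℕ}
    (hJ : ∀ p ∈ P, #(J p) = m) {δ : ℝ} (hδ : 2 * #P * exp (-(g ^ 2 / 16 * m)) ≤ δ) :
    ENNReal.ofReal (1 - δ) ≤
      μ {ω | ∀ p ∈ P, HasApproxPair (W · ω p.2) (U p.1 ω) (c p) g (J p)} := by
  set G := {ω | ∀ p ∈ P, HasApproxPair (W · ω p.2) (U p.1 ω) (c p) g (J p)}
  have hblock : ∀ p : Fin n × Fin d,
      iIndepFun (Sum.elim (fun j ω => W j ω p.2) (fun j ω => U p.1 ω j)) μ := fun p => by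
    have := hindep.precomp ((Prod.mk_left_injective p.2).sumMap (Prod.mk_right_injective p.1))
    convert this using 1
    funext j
    cases j <;> rfl
  have hbad : μ Gᶜ ≤ ENNReal.ofReal δ := by
    have hGc : Gᶜ = ⋃ p ∈ P, {ω | ¬ HasApproxPair (W · ω p.2) (U p.1 ω) (c p) g (J p)} := by
      ext ω
      simp [G]
    calc μ Gᶜ ≤ ∑ p ∈ P, μ {ω | ¬ HasApproxPair (W · ω p.2) (U p.1 ω) (c p) g (J p)} :=
          hGc ▸ measure_biUnion_finset_le _ _
      _ ≤ ∑ p ∈ P, 2 * ENNReal.ofReal (exp (-(g ^ 2 / 16 * m))) := sum_le_sum fun p hp =>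
          hJ p hp ▸ measure_not_hasApproxPair_le (hblock p) (fun j => hW j p.2)
            (fun j => hU p.1 j) (hc p) hg0 hg2 (J p)
      _ = ENNReal.ofReal (2 * #P * exp (-(g ^ 2 / 16 * m))) := by
          rw [sum_const, nsmul_eq_mul, ENNReal.ofReal_mul (by positivity),
            ENNReal.ofReal_mul (by positivity)]
          simp [mul_assoc, mul_comm]
      _ ≤ ENNReal.ofReal δ := ENNReal.ofReal_le_ofReal hδ
  exact ofReal_one_sub_le_of_measure_compl_le
    ((by positivity : (0 : ℝ) ≤ 2 * #P * _).trans hδ) hbad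

end Probability

section Pruning

variable {d n k : ℕ}

/-- The event of the theorem, for one realisation `W`, `U` of the random weights. -/
def PruningApproximates (wstar : Fin n → Fin d → ℝ) (s : ℕ) (ε : ℝ) (W : Fin k → Fin d → ℝ)
    (U : Fin n → Fin k → ℝ) : Prop :=
  ∃ (b : Fin k → Fin d → ℝ) (btil : Fin n → Fin k → ℝ),
    (∀ j t, b j t = 0 ∨ b j t = 1) ∧ (∀ i j, btil i j = 0 ∨ btil i j = 1) ∧
    (∀ x : Fin d → ℝ, (∀ t, |x t| ≤ 1) →
      l2norm (fun i =>
        relu (∑ j, btil i j * U i j * relu (∑ t, W j t * b j t * x t)) -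
          relu (∑ t, wstar i t * x t)) ≤ ε) ∧
    (∑ j, l0 (b j)) ≤ 2 * s * n ∧ (∑ i, l0 (btil i)) ≤ 2 * s * n

/-- The masks keeping, for every pair `(i, t)`, exactly the paths `t → j → i` with
`j ∈ F (i, t)`. -/
def hiddenMask (F : Fin n × Fin d → Finset (Fin k)) (j : Fin k) (t : Fin d) : ℝ :=
  if ∃ i, j ∈ F (i, t) then 1 else 0

def outputMask (F : Fin n × Fin d → Finset (Fin k)) (i : Fin n) (j : Fin k) : ℝ :=
  if ∃ t, j ∈ F (i, t) then 1 else 0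

variable {F : Fin n × Fin d → Finset (Fin k)}

lemma hiddenMask_of_mem (hF : Pairwise (Disjoint on F)) {i : Fin n} {t : Fin d} {j : Fin k}
    (hj : j ∈ F (i, t)) (t' : Fin d) : hiddenMask F j t' = if t' = t then 1 else 0 := by
  by_cases ht : t' = t
  · subst ht
    rw [if_pos rfl]
    exact if_pos ⟨i, hj⟩
  · rw [if_neg ht, hiddenMask, if_neg]
    rintro ⟨i', hj'⟩
    exact ht (congrArg Prod.snd (hF.eq (not_disjoint_iff.2 ⟨j, hj', hj⟩)))

lemma sum_outputMask_mul_relu (hF : Pairwise (Disjoint on F)) (W : Fin k → Fin d → ℝ)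
    (U : Fin n → Fin k → ℝ) (x : Fin d → ℝ) (i : Fin n) :
    ∑ j, outputMask F i j * U i j * relu (∑ t, W j t * hiddenMask F j t * x t) =
      ∑ t, ∑ j ∈ F (i, t), U i j * relu (W j t * x t) := by
  have hdisj : ((univ : Finset (Fin d)) : Set (Fin d)).PairwiseDisjoint fun t => F (i, t) :=
    fun t _ t' _ htt' => hF fun h => htt' (congrArg Prod.snd h)
  rw [← sum_subset (subset_univ (univ.biUnion fun t => F (i, t))), sum_biUnion hdisj]
  · refine sum_congr rfl fun t _ => sum_congr rfl fun j hj => ?_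
    simp [outputMask, if_pos (⟨t, hj⟩ : ∃ t, j ∈ F (i, t)), hiddenMask_of_mem hF hj]
  · intro j _ hj
    have : ¬∃ t, j ∈ F (i, t) := fun ⟨t, ht⟩ => hj (mem_biUnion.2 ⟨t, mem_univ _, ht⟩)
    simp [outputMask, this]

lemma l0_hiddenMask (F : Fin n × Fin d → Finset (Fin k)) (j : Fin k) :
    l0 (hiddenMask F j) = #{t | ∃ i, j ∈ F (i, t)} := by
  simp [l0, hiddenMask]

lemma l0_outputMask (F : Fin n × Fin d → Finset (Fin k)) (i : Fin n) :
    l0 (outputMask F i) = #{j | ∃ t, j ∈ F (i, t)} := by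
  simp [l0, outputMask]

lemma sum_l0_hiddenMask_le (F : Fin n × Fin d → Finset (Fin k)) :
    ∑ j, l0 (hiddenMask F j) ≤ ∑ p, #(F p) := by
  calc ∑ j, l0 (hiddenMask F j) = ∑ t, #{j | ∃ i, j ∈ F (i, t)} := by
        simp only [l0_hiddenMask, card_filter]
        exact sum_comm
    _ ≤ ∑ t, ∑ i, #(F (i, t)) := sum_le_sum fun t _ => card_filter_exists_mem_le fun i => F (i, t)
    _ = ∑ p, #(F p) := (Fintype.sum_prod_type_right fun p => #(F p)).symm

lemma sum_l0_outputMask_le (F : Fin n × Fin d → Finset (Fin k)) :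
    ∑ i, l0 (outputMask F i) ≤ ∑ p, #(F p) := by
  calc ∑ i, l0 (outputMask F i) ≤ ∑ i, ∑ t, #(F (i, t)) := by
        simp only [l0_outputMask]
        exact sum_le_sum fun i _ => card_filter_exists_mem_le fun t => F (i, t)
    _ = ∑ p, #(F p) := (Fintype.sum_prod_type fun p => #(F p)).symm

lemma pruningApproximates_of_fibers (wstar : Fin n → Fin d → ℝ) {s : ℕ}
    (hsparse : ∀ i, l0 (wstar i) ≤ s) {ε g : ℝ} (hg : 0 ≤ g) (hε : √n * (s * g) ≤ ε)
    (W : Fin k → Fin d → ℝ) (U : Fin n → Fin k → ℝ) (F : Fin n × Fin d → Finset (Fin k))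
    (hF : Pairwise (Disjoint on F)) (hcard : ∀ p, #(F p) ≤ 2)
    (hzero : ∀ i t, wstar i t = 0 → F (i, t) = ∅)
    (happrox : ∀ i t, wstar i t ≠ 0 → ∀ x : ℝ, |x| ≤ 1 →
      |∑ j ∈ F (i, t), U i j * relu (W j t * x) - wstar i t * x| ≤ g) :
    PruningApproximates wstar s ε W U := by
  have htotal : ∑ p, #(F p) ≤ 2 * s * n := by
    calc ∑ p, #(F p) ≤ ∑ p : Fin n × Fin d, if wstar p.1 p.2 ≠ 0 then 2 else 0 :=
          sum_le_sum fun p _ => by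
            split_ifs with hp
            · exact hcard p
            · simp [hzero p.1 p.2 (not_not.1 hp)]
      _ = ∑ i, l0 (wstar i) * 2 := by
          simp only [Fintype.sum_prod_type, sum_ite_ne_zero_eq_l0_smul, smul_eq_mul]
      _ ≤ ∑ _i : Fin n, s * 2 := sum_le_sum fun i _ => Nat.mul_le_mul_right 2 (hsparse i)
      _ = 2 * s * n := by simp [mul_comm]
  refine ⟨hiddenMask F, outputMask F, fun j t => ?_, fun i j => ?_, fun x hx => ?_,
    (sum_l0_hiddenMask_le F).trans htotal, (sum_l0_outputMask_le F).trans htotal⟩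
  · unfold hiddenMask; split_ifs <;> simp
  · unfold outputMask; split_ifs <;> simp
  refine (l2norm_le_sqrt_mul (by positivity) fun i => ?_).trans hε
  rw [sum_outputMask_mul_relu hF]
  calc _ ≤ |∑ t, ∑ j ∈ F (i, t), U i j * relu (W j t * x t) - ∑ t, wstar i t * x t| :=
        abs_relu_sub_relu_le _ _
    _ ≤ ∑ t, |∑ j ∈ F (i, t), U i j * relu (W j t * x t) - wstar i t * x t| := by
        rw [← sum_sub_distrib]
        exact abs_sum_le_sum_abs _ _
    _ ≤ ∑ t, if wstar i t ≠ 0 then g else 0 := sum_le_sum fun t _ => by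
        split_ifs with ht
        · exact happrox i t ht _ (hx t)
        · rw [not_not] at ht
          simp [hzero i t ht, ht]
    _ = l0 (wstar i) * g := by rw [sum_ite_ne_zero_eq_l0_smul, nsmul_eq_mul]
    _ ≤ s * g := by gcongr; exact_mod_cast hsparse i

lemma pruningApproximates_of_hasApproxPair (wstar : Fin n → Fin d → ℝ) {s : ℕ}
    (hsparse : ∀ i, l0 (wstar i) ≤ s) {ε g : ℝ} (hg : 0 ≤ g) (hε : √n * (s * g) ≤ ε)
    (W : Fin k → Fin d → ℝ) (U : Fin n → Fin k → ℝ) (J : Fin n × Fin d → Finset (Fin k))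
    (hJ : Pairwise (Disjoint on J))
    (hgood : ∀ p : Fin n × Fin d, wstar p.1 p.2 ≠ 0 →
      HasApproxPair (W · p.2) (U p.1) (wstar p.1 p.2) g (J p)) :
    PruningApproximates wstar s ε W U := by
  have hfiber : ∀ p : Fin n × Fin d, ∃ F ⊆ J p, #F ≤ 2 ∧ (wstar p.1 p.2 = 0 → F = ∅) ∧
      (wstar p.1 p.2 ≠ 0 → ∀ x : ℝ, |x| ≤ 1 →
        |∑ j ∈ F, U p.1 j * relu (W j p.2 * x) - wstar p.1 p.2 * x| ≤ g) := fun p => by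
    by_cases hp : wstar p.1 p.2 = 0
    · exact ⟨∅, empty_subset _, by simp, fun _ => rfl, fun h => (h hp).elim⟩
    · obtain ⟨F, hFJ, hF2, hFapprox⟩ := (hgood p hp).exists_subset_card_le_two
      exact ⟨F, hFJ, hF2, fun h => (hp h).elim, fun _ => hFapprox⟩
  choose F hFJ hF2 hF0 hFapprox using hfiber
  exact pruningApproximates_of_fibers wstar hsparse hg hε W U F
    (fun p q hpq => (hJ hpq).mono (hFJ p) (hFJ q)) hF2 (fun i t => hF0 (i, t))
    (fun i t => hFapprox (i, t))

lemma pruningApproximates_of_abs_le (wstar : Fin n → Fin d → ℝ) {s : ℕ}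
    (hsparse : ∀ i, l0 (wstar i) ≤ s) {ε g : ℝ} (hg : 0 ≤ g) (hw : ∀ i t, |wstar i t| ≤ g)
    (hε : √n * (s * g) ≤ ε) (W : Fin k → Fin d → ℝ) (U : Fin n → Fin k → ℝ) :
    PruningApproximates wstar s ε W U :=
  pruningApproximates_of_fibers wstar hsparse hg hε W U (fun _ => ∅)
    (fun _ _ _ => disjoint_empty_left _) (fun _ => by simp) (fun _ _ _ => rfl)
    fun i t _ x hx => by
      simpa [abs_mul] using (mul_le_of_le_one_right (abs_nonneg _) hx).trans (hw i t)

end Pruning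

lemma two_mul_mul_exp_neg_le {n s : ℕ} {ε δ : ℝ} (hn : 0 < n) (hs : 0 < s) (hε : 0 < ε)
    (hδ : 0 < δ) :
    2 * (n * s) * exp (-((ε / (s * √n)) ^ 2 / 16 *
      ⌈16 * (s : ℝ) ^ 2 * n / ε ^ 2 * Real.log (2 * n * s / δ)⌉₊)) ≤ δ := by
  set A := 16 * (s : ℝ) ^ 2 * n / ε ^ 2
  set L := Real.log (2 * n * s / δ)
  have hA : 0 < A := by positivity
  have hAinv : (ε / (s * √n)) ^ 2 / 16 = A⁻¹ := by
    rw [div_pow, mul_pow, sq_sqrt n.cast_nonneg]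
    simp only [A]
    field_simp
  have hL : L ≤ A⁻¹ * ⌈A * L⌉₊ := by
    calc L = A⁻¹ * (A * L) := by field_simp
      _ ≤ A⁻¹ * ⌈A * L⌉₊ := by gcongr; exact Nat.le_ceil _
  calc 2 * (n * s) * exp (-((ε / (s * √n)) ^ 2 / 16 * ⌈A * L⌉₊)) ≤ 2 * (n * s) * exp (-L) := by
        rw [hAinv]
        gcongr
    _ = δ := by
        rw [exp_neg, exp_log (by positivity)]
        field_simp

theorem relu_layer_by_pruning_general
    (d s n k : ℕ) (hn : 0 < n) (hs1 : 1 ≤ s)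
    (wstar : Fin n → Fin d → ℝ) (hwstar : ∀ r t, |wstar r t| ≤ 1 / Real.sqrt s)
    (hsparse : ∀ r, l0 (wstar r) ≤ s)
    (ε δ : ℝ) (hε : 0 < ε) (hδ : 0 < δ)
    {Ω : Type*} [MeasurableSpace Ω] (μ : Measure Ω) [IsProbabilityMeasure μ]
    (W : Fin k → Ω → (Fin d → ℝ)) (U : Fin n → Ω → (Fin k → ℝ))
    (hindep : iIndepFun
      (Sum.elim (fun p : Fin k × Fin d => fun ω => W p.1 ω p.2)
        (fun p : Fin n × Fin k => fun ω => U p.1 ω p.2)) μ)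
    (hWdist : ∀ (j : Fin k) (t : Fin d),
      μ.map (fun ω => W j ω t) = unif (Set.Icc (-1 : ℝ) 1))
    (hUdist : ∀ (i : Fin n) (j : Fin k),
      μ.map (fun ω => U i ω j) = unif (Set.Icc (-1 : ℝ) 1))
    (hk : (n : ℝ) * s * ⌈16 * (s : ℝ) ^ 2 * n / ε ^ 2 *
      Real.log (2 * n * s / δ)⌉₊ ≤ (k : ℝ)) :
    ENNReal.ofReal (1 - δ) ≤ μ {ω | ∃ (b : Fin k → Fin d → ℝ)
        (btil : Fin n → Fin k → ℝ),
      (∀ j t, b j t = 0 ∨ b j t = 1) ∧ (∀ i j, btil i j = 0 ∨ btil i j = 1) ∧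
      (∀ x : Fin d → ℝ, (∀ t, |x t| ≤ 1) →
        l2norm (fun i =>
          relu (∑ j, btil i j * U i ω j * relu (∑ t, W j ω t * b j t * x t)) -
            relu (∑ t, wstar i t * x t)) ≤ ε) ∧
      (∑ j, l0 (b j)) ≤ 2 * s * n ∧ (∑ i, l0 (btil i)) ≤ 2 * s * n} := by
  change ENNReal.ofReal (1 - δ) ≤ μ {ω | PruningApproximates wstar s ε (W · ω) (U · ω)}
  have hw : ∀ i t, |wstar i t| ≤ 1 := fun i t => (hwstar i t).trans
    (div_le_one_of_le₀ (one_le_sqrt.2 (by exact_mod_cast hs1)) (sqrt_nonneg _))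
  set g := ε / (s * √n)
  have hg0 : 0 < g := by positivity
  have hgε : √n * (s * g) = ε := by simp only [g]; field_simp
  rcases le_or_gt 1 g with hg1 | hg1
  · have hall (ω : Ω) : PruningApproximates wstar s ε (W · ω) (U · ω) :=
      pruningApproximates_of_abs_le wstar hsparse hg0.le (fun i t => (hw i t).trans hg1) hgε.le _ _
    simp [hall, hδ.le]
  set P : Finset (Fin n × Fin d) := {p | wstar p.1 p.2 ≠ 0}
  have hP : #P ≤ n * s := card_filter_ne_zero_le hsparse
  obtain ⟨J, hJ, hJm⟩ := exists_pairwise_disjoint_card_eq P (k := k)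
    (Nat.mul_le_mul_right _ hP |>.trans (by exact_mod_cast hk))
  refine (ofReal_one_sub_le_measure_forall_hasApproxPair W U hindep hWdist hUdist
    (fun p => hw p.1 p.2) hg0 (by linarith) P J hJm ?_).trans
    (measure_mono fun ω hω => pruningApproximates_of_hasApproxPair wstar hsparse hg0.le hgε.le
      _ _ J hJ fun p hp => hω p (by simpa [P] using hp))
  calc _ ≤ 2 * (n * s : ℕ) * exp (-(g ^ 2 / 16 * _)) := by gcongr
    _ ≤ δ := by exact_mod_cast two_mul_mul_exp_neg_le hn hs1 hε hδ

/-- a single ReLU layer `F(x)ᵢ = σ(⟨w⁽ⁱ⁾*,x⟩)` with `n` neurons and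
`s`-sparse weights bounded by `1/√s` is uniformly `ε`-approximated (in Euclidean
norm, on `‖x‖_∞ ≤ 1`), with probability at least `1-δ`, by pruning the weights of
a random two-layer ReLU network with i.i.d. uniform weights, for
`k ≥ n·s·⌈(16s²n/ε²)·log(2ns/δ)⌉`, with `Σⱼ‖b⁽ʲ⁾‖₀ ≤ 2sn` and `Σᵢ‖b̃⁽ⁱ⁾‖₀ ≤ 2sn`. -/
theorem relu_layer_by_pruning
    (d s n k : ℕ) (hd : 0 < d) (hn : 0 < n) (hs1 : 1 ≤ s) (hsd : s ≤ d)
    (wstar : Fin n → Fin d → ℝ) (hwstar : ∀ r t, |wstar r t| ≤ 1 / Real.sqrt s)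
    (hsparse : ∀ r, l0 (wstar r) ≤ s)
    (ε δ : ℝ) (hε : 0 < ε) (hδ : 0 < δ)
    {Ω : Type*} [MeasurableSpace Ω] (μ : Measure Ω) [IsProbabilityMeasure μ]
    (W : Fin k → Ω → (Fin d → ℝ)) (U : Fin n → Ω → (Fin k → ℝ))
    (hindep : iIndepFun
      (Sum.elim (fun p : Fin k × Fin d => fun ω => W p.1 ω p.2)
        (fun p : Fin n × Fin k => fun ω => U p.1 ω p.2)) μ)
    (hWdist : ∀ (j : Fin k) (t : Fin d),
      μ.map (fun ω => W j ω t) = unif (Set.Icc (-1 : ℝ) 1))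
    (hUdist : ∀ (i : Fin n) (j : Fin k),
      μ.map (fun ω => U i ω j) = unif (Set.Icc (-1 : ℝ) 1))
    (hk : (n : ℝ) * s * ⌈16 * (s : ℝ) ^ 2 * n / ε ^ 2 *
      Real.log (2 * n * s / δ)⌉₊ ≤ (k : ℝ)) :
    ENNReal.ofReal (1 - δ) ≤ μ {ω | ∃ (b : Fin k → Fin d → ℝ)
        (btil : Fin n → Fin k → ℝ),
      (∀ j t, b j t = 0 ∨ b j t = 1) ∧ (∀ i j, btil i j = 0 ∨ btil i j = 1) ∧
      (∀ x : Fin d → ℝ, (∀ t, |x t| ≤ 1) →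
        l2norm (fun i =>
          relu (∑ j, btil i j * U i ω j * relu (∑ t, W j ω t * b j t * x t)) -
            relu (∑ t, wstar i t * x t)) ≤ ε) ∧
      (∑ j, l0 (b j)) ≤ 2 * s * n ∧ (∑ i, l0 (btil i)) ≤ 2 * s * n} :=
  relu_layer_by_pruning_general d s n k hn hs1 wstar hwstar hsparse ε δ hε hδ μ W U hindep hWdist
    hUdist hk
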